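/- arXiv:2204.02128 — 2 statements merged into one kernel-verified Lean document; each statement's English description precedes it below -/
import Mathlib

section
/- Weight bound lemma (Lemma on well-spread guesses): let $T$ be a finite rooted tree, $a\colon T\to\mathbb{N}^+$ a function such that for every node $v$, $a(v)\geq \sum_{c \text{ child of } v} a(c)$. Let $S\subseteq T$ be a set of 'guessed' nodes with a function $g\colon S\to\mathbb{N}$ satisfying $g(v)\geq a(v)$ for all $v\in S$, such that no two nodes of $S$ are at the same depth (well-spread), and additionally for every $v\in S$ that is the unique child of its parent, $g(v)=a(v)$. Define the weight $w(v)=|\{u\in S : u \text{ is in the subtree rooted at } v\}|$. If $v\in S$ and $w(v)>a(v)$, then some strict descendant $v'$ of $v$ with $v'\in S$ satisfies $w(v')\geq g(v')$ (is heavy). -/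
open Finset
open scoped Classical

/-- `u` is a (weak) descendant of `v`: iterating `parent` from `u` reaches `v`. -/
def IsDesc {T : Type*} (r : T) (parent : T → T) (u v : T) : Prop :=
  Relation.ReflTransGen (fun a b => a ≠ r ∧ parent a = b) u v

/-- `u` is a strict descendant of `v`. -/
def IsStrictDesc {T : Type*} (r : T) (parent : T → T) (u v : T) : Prop :=
  Relation.TransGen (fun a b => a ≠ r ∧ parent a = b) u v

/-- The children of a node `v` in the rooted tree. -/
noncomputable def childrenOf {T : Type*} [Fintype T] [DecidableEq T]
    (parent : T → T) (v : T) : Finset T :=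
  Finset.univ.filter (fun c => parent c = v ∧ c ≠ v)

/-- The weight of `v`: the number of guessed nodes in the subtree rooted at `v`. -/
noncomputable def weightOf {T : Type*} [Fintype T] [DecidableEq T]
    (r : T) (parent : T → T) (S : Finset T) (v : T) : ℕ :=
  (S.filter (fun u => IsDesc r parent u v)).card

section Aux
variable {T : Type*} (r : T) (parent : T → T) (depth : T → ℕ)

lemma strict_depth_lt (hdepth : ∀ v, v ≠ r → depth v = depth (parent v) + 1)
    {u v : T} (h : IsStrictDesc r parent u v) : depth v < depth u := by
  induction h with
  | single h => rw [hdepth u h.1, h.2]; omega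
  | tail _ h ih => have := hdepth _ h.1; rw [h.2] at this; omega

lemma desc_depth_le (hdepth : ∀ v, v ≠ r → depth v = depth (parent v) + 1)
    {u v : T} (h : IsDesc r parent u v) : depth v ≤ depth u := by
  rcases (Relation.reflTransGen_iff_eq_or_transGen.mp h) with rfl | h'
  · exact le_rfl
  · exact (strict_depth_lt r parent depth hdepth h').le

lemma desc_comp {u v1 v2 : T} (h1 : IsDesc r parent u v1) (h2 : IsDesc r parent u v2) :
    IsDesc r parent v1 v2 ∨ IsDesc r parent v2 v1 := by
  induction h1 using Relation.ReflTransGen.head_induction_on generalizing v2 with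
  | refl => exact Or.inl h2
  | head hstep htl ih =>
    rcases Relation.ReflTransGen.cases_head h2 with rfl | ⟨c, hc, h2'⟩
    · exact Or.inr (Relation.ReflTransGen.head hstep htl)
    · have hbc : _ = c := hstep.2.symm.trans hc.2
      exact ih (hbc ▸ h2')

variable [Fintype T] [DecidableEq T]

lemma child_ne_root (hroot : parent r = r) {x c : T} (hc : c ∈ childrenOf parent x) :
    c ≠ r := by
  simp only [childrenOf, mem_filter] at hc
  rintro rfl
  exact hc.2.2 (hroot.symm.trans hc.2.1)

lemma child_depth (hroot : parent r = r)
    (hdepth : ∀ v, v ≠ r → depth v = depth (parent v) + 1)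
    {x c : T} (hc : c ∈ childrenOf parent x) : depth c = depth x + 1 := by
  have h1 := hdepth c (child_ne_root r parent hroot hc)
  simp only [childrenOf, mem_filter] at hc
  rw [h1, hc.2.1]

lemma child_strict_desc (hroot : parent r = r) {x c : T}
    (hc : c ∈ childrenOf parent x) : IsStrictDesc r parent c x := by
  have hne := child_ne_root r parent hroot hc
  simp only [childrenOf, mem_filter] at hc
  exact Relation.TransGen.single ⟨hne, hc.2.1⟩

lemma desc_child_strict (hroot : parent r = r) {x c u : T}
    (hc : c ∈ childrenOf parent x) (hu : IsDesc r parent u c) :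
    IsStrictDesc r parent u x := by
  have hne := child_ne_root r parent hroot hc
  simp only [childrenOf, mem_filter] at hc
  exact Relation.TransGen.tail' hu ⟨hne, hc.2.1⟩

lemma subtree_decomp (hroot : parent r = r)
    (hdepth : ∀ v, v ≠ r → depth v = depth (parent v) + 1)
    (S : Finset T) (x : T) :
    S.filter (fun u => IsDesc r parent u x) =
      (S.filter (fun u => u = x)) ∪
        (childrenOf parent x).biUnion (fun c => S.filter (fun u => IsDesc r parent u c)) := by
  ext u
  simp only [mem_union, mem_biUnion, mem_filter]
  constructor
  · rintro ⟨huS, hdesc⟩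
    by_cases hux : u = x
    · exact Or.inl ⟨huS, hux⟩
    · right
      rcases Relation.ReflTransGen.cases_tail hdesc with h | ⟨c, huc, hstep⟩
      · exact absurd h.symm hux
      · refine ⟨c, ?_, huS, huc⟩
        simp only [childrenOf, mem_filter, mem_univ, true_and]
        refine ⟨hstep.2, ?_⟩
        rintro rfl
        have := hdepth c hstep.1
        rw [hstep.2] at this
        omega
  · rintro (⟨huS, rfl⟩ | ⟨c, hc, huS, huc⟩)
    · exact ⟨huS, Relation.ReflTransGen.refl⟩
    · exact ⟨huS, (desc_child_strict r parent hroot hc huc).to_reflTransGen⟩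

lemma weight_rec (hroot : parent r = r)
    (hdepth : ∀ v, v ≠ r → depth v = depth (parent v) + 1)
    (S : Finset T) (x : T) :
    weightOf r parent S x =
      (if x ∈ S then 1 else 0) + ∑ c ∈ childrenOf parent x, weightOf r parent S c := by
  unfold weightOf
  rw [subtree_decomp r parent depth hroot hdepth S x]
  rw [card_union_of_disjoint, card_biUnion]
  · congr 1
    · by_cases hx : x ∈ S <;> simp [filter_eq', hx]
  · -- pairwise disjoint children subtrees
    intro c1 hc1 c2 hc2 hne
    simp only [disjoint_left, mem_filter]
    rintro u ⟨huS, hu1⟩ ⟨-, hu2⟩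
    rcases desc_comp r parent hu1 hu2 with h | h
    · have hle := desc_depth_le r parent depth hdepth h
      have := child_depth r parent depth hroot hdepth hc1
      have := child_depth r parent depth hroot hdepth hc2
      have hlt := Relation.reflTransGen_iff_eq_or_transGen.mp h
      rcases hlt with rfl | h'
      · exact hne rfl
      · have := strict_depth_lt r parent depth hdepth h'; omega
    · have := child_depth r parent depth hroot hdepth hc1
      have := child_depth r parent depth hroot hdepth hc2
      rcases Relation.reflTransGen_iff_eq_or_transGen.mp h with rfl | h'
      · exact hne rfl
      · have := strict_depth_lt r parent depth hdepth h'; omega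
  · -- disjoint {x} part from biUnion
    simp only [disjoint_left, mem_filter, mem_biUnion]
    rintro u ⟨-, rfl⟩ ⟨c, hc, -, hdesc⟩
    have := desc_depth_le r parent depth hdepth hdesc
    have := child_depth r parent depth hroot hdepth hc
    omega
end Aux

section Key
variable {T : Type*} [Fintype T] [DecidableEq T]

lemma key_lemma (r : T) (parent : T → T) (depth : T → ℕ)
    (hroot : parent r = r)
    (hdepth : ∀ v, v ≠ r → depth v = depth (parent v) + 1)
    (a : T → ℕ) (hapos : ∀ v, 0 < a v)
    (hsuper : ∀ v, ∑ c ∈ childrenOf parent v, a c ≤ a v)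
    (S : Finset T) (g : T → ℕ)
    (hws : ∀ u ∈ S, ∀ v ∈ S, depth u = depth v → u = v)
    (honly : ∀ v ∈ S, (∀ c, parent c = parent v → c ≠ parent v → c = v) → g v = a v) :
    ∀ n (x : T), (univ.filter (fun u => IsDesc r parent u x)).card ≤ n →
      (∀ u ∈ S, IsStrictDesc r parent u x → weightOf r parent S u < g u) →
      weightOf r parent S x ≤ a x ∧ (x ∉ S → weightOf r parent S x < a x) := by
  intro n
  induction n with
  | zero =>
    intro x hcard _
    exfalso
    have : x ∈ univ.filter (fun u => IsDesc r parent u x) := by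
      simp only [mem_filter, mem_univ, true_and]
      exact Relation.ReflTransGen.refl
    have := card_pos.mpr ⟨x, this⟩
    omega
  | succ n ih =>
    intro x hcard hnh
    -- facts about children
    have hchild : ∀ c ∈ childrenOf parent x,
        weightOf r parent S c ≤ a c ∧ (c ∉ S → weightOf r parent S c < a c) := by
      intro c hc
      apply ih
      · -- subtree of c strictly smaller
        have hsub : univ.filter (fun u => IsDesc r parent u c) ⊆
            univ.filter (fun u => IsDesc r parent u x) := by
          intro u hu
          simp only [mem_filter, mem_univ, true_and] at hu ⊢
          exact (desc_child_strict r parent hroot hc hu).to_reflTransGen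
        have hxnot : x ∉ univ.filter (fun u => IsDesc r parent u c) := by
          simp only [mem_filter, mem_univ, true_and]
          intro h
          have := desc_depth_le r parent depth hdepth h
          have := child_depth r parent depth hroot hdepth hc
          omega
        have hxin : x ∈ univ.filter (fun u => IsDesc r parent u x) := by
          simp only [mem_filter, mem_univ, true_and]
          exact Relation.ReflTransGen.refl
        have := card_lt_card (Finset.ssubset_iff_of_subset hsub |>.mpr ⟨x, hxin, hxnot⟩)
        omega
      · intro u huS hu
        exact hnh u huS (hu.trans (child_strict_desc r parent hroot hc))
    have hw := weight_rec r parent depth hroot hdepth S x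
    have hsum : ∑ c ∈ childrenOf parent x, weightOf r parent S c < a x := by
      by_contra hge
      push_neg at hge
      have h1 : ∑ c ∈ childrenOf parent x, weightOf r parent S c ≤
          ∑ c ∈ childrenOf parent x, a c :=
        Finset.sum_le_sum (fun c hc => (hchild c hc).1)
      have h2 := hsuper x
      -- all tight
      have htight : ∀ c ∈ childrenOf parent x, weightOf r parent S c = a c := by
        intro c hc
        by_contra hne
        have hlt : weightOf r parent S c < a c := lt_of_le_of_ne (hchild c hc).1 hne
        have : ∑ c ∈ childrenOf parent x, weightOf r parent S c <
            ∑ c ∈ childrenOf parent x, a c :=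
          Finset.sum_lt_sum (fun d hd => (hchild d hd).1) ⟨c, hc, hlt⟩
        omega
      have hmem : ∀ c ∈ childrenOf parent x, c ∈ S := by
        intro c hc
        by_contra hcs
        have := (hchild c hc).2 hcs
        have := htight c hc
        omega
      -- children nonempty
      have hne : (childrenOf parent x).Nonempty := by
        rcases Finset.eq_empty_or_nonempty (childrenOf parent x) with h | h
        · exfalso
          rw [h] at hge
          simp at hge
          have := hapos x
          omega
        · exact h
      obtain ⟨c0, hc0⟩ := hne
      -- children is a singleton {c0}
      have hsingle : ∀ c ∈ childrenOf parent x, c = c0 := by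
        intro c hc
        apply hws c (hmem c hc) c0 (hmem c0 hc0)
        rw [child_depth r parent depth hroot hdepth hc,
          child_depth r parent depth hroot hdepth hc0]
      -- c0 is an only child, so g c0 = a c0
      have hpc0 : parent c0 = x ∧ c0 ≠ x := by
        have := hc0; simp only [childrenOf, mem_filter] at this; exact this.2
      have hgc0 : g c0 = a c0 := by
        apply honly c0 (hmem c0 hc0)
        intro c hpc hcne
        rw [hpc0.1] at hpc hcne
        exact hsingle c (by simp [childrenOf, hpc, hcne])
      have := hnh c0 (hmem c0 hc0) (child_strict_desc r parent hroot hc0)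
      have := htight c0 hc0
      omega
    constructor
    · by_cases hx : x ∈ S <;> simp [hx] at hw <;> omega
    · intro hx
      simp [hx] at hw
      omega
end Key

/-- Weight bound lemma. In a finite rooted tree with positive anonymity `a`
superadditive over children, a well-spread set `S` of guessed nodes with guesses `g ≥ a`
(with equality on only-children), if `v ∈ S` has weight `w(v) > a(v)` then some strict
descendant `v' ∈ S` of `v` is heavy, i.e. `w(v') ≥ g(v')`. -/
theorem weight_bound {T : Type*} [Fintype T] [DecidableEq T]
    (r : T) (parent : T → T) (depth : T → ℕ)
    (hroot : parent r = r) (hdepth0 : depth r = 0)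
    (hdepth : ∀ v, v ≠ r → depth v = depth (parent v) + 1)
    (hreach : ∀ v, IsDesc r parent v r)
    (a : T → ℕ) (hapos : ∀ v, 0 < a v)
    (hsuper : ∀ v, ∑ c ∈ childrenOf parent v, a c ≤ a v)
    (S : Finset T) (g : T → ℕ)
    (hg : ∀ v ∈ S, a v ≤ g v)
    (hws : ∀ u ∈ S, ∀ v ∈ S, depth u = depth v → u = v)
    (honly : ∀ v ∈ S, (∀ c, parent c = parent v → c ≠ parent v → c = v) → g v = a v)
    (v : T) (hv : v ∈ S) (hw : a v < weightOf r parent S v) :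
    ∃ v' ∈ S, IsStrictDesc r parent v' v ∧ g v' ≤ weightOf r parent S v' := by
  by_contra hcon
  push_neg at hcon
  have := (key_lemma r parent depth hroot hdepth a hapos hsuper S g hws honly
    (univ.filter (fun u => IsDesc r parent u v)).card v le_rfl
    (fun u huS hu => hcon u huS hu)).1
  omega
end

section
/- Correctness criterion for guesses: in the setting of the weight bound lemma (finite rooted tree, anonymity $a$ superadditive over children, well-spread guessed set $S$ with $g(v)\geq a(v)$ for all $v\in S$ and $g(v)=a(v)$ whenever $v\in S$ is an only child), if $v\in S$ is heavy (i.e., $w(v)\geq g(v)$) and no strict descendant of $v$ in $S$ is heavy, then $g(v)=a(v)$. -/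
/-!
Call a subtree light if none of its guessed nodes is heavy. By induction from the leaves, a node
`u` whose strict descendants in `S` are all light satisfies `∑ c, w c < a u` over its children `c`.
Each child has `w c ≤ a c`, strictly if `c ∉ S`, so superadditivity of `a` gives the bound as soon
as some child lies outside `S`. Otherwise all children are guessed nodes of the same depth, so there
is at most one; if there is one, it is an only child, so `w c < g c = a c ≤ a u`. For heavy `v ∈ S`
this yields `g v ≤ w v = 1 + ∑ c, w c ≤ a v ≤ g v`.
-/

open Finset
open scoped Classical

section RootedTree

variable {T : Type*} {r : T} {parent : T → T} {depth : T → ℕ}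

theorem IsDesc.exists_iterate_eq (hdepth : ∀ v, v ≠ r → depth v = depth (parent v) + 1)
    {x y : T} (h : IsDesc r parent x y) : ∃ k, parent^[k] x = y ∧ depth x = depth y + k := by
  induction h using Relation.ReflTransGen.head_induction_on with
  | refl => exact ⟨0, rfl, rfl⟩
  | head hxz _ ih =>
    obtain ⟨k, hk, hd⟩ := ih
    refine ⟨k + 1, ?_, ?_⟩
    · rw [Function.iterate_succ_apply, hxz.2, hk]
    · rw [hdepth _ hxz.1, hxz.2, hd]
      ring

theorem IsDesc.depth_le (hdepth : ∀ v, v ≠ r → depth v = depth (parent v) + 1)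
    {x y : T} (h : IsDesc r parent x y) : depth y ≤ depth x := by
  obtain ⟨k, -, hk⟩ := h.exists_iterate_eq hdepth
  omega

theorem IsDesc.eq_of_depth_eq (hdepth : ∀ v, v ≠ r → depth v = depth (parent v) + 1)
    {x y z : T} (hy : IsDesc r parent x y) (hz : IsDesc r parent x z)
    (hyz : depth y = depth z) : y = z := by
  obtain ⟨k, rfl, hk⟩ := hy.exists_iterate_eq hdepth
  obtain ⟨m, rfl, hm⟩ := hz.exists_iterate_eq hdepth
  obtain rfl : k = m := by omega
  rfl

variable [Fintype T] [DecidableEq T]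

@[simp]
theorem mem_childrenOf {c u : T} : c ∈ childrenOf parent u ↔ parent c = u ∧ c ≠ u := by
  simp [childrenOf]

theorem ne_root_of_mem_childrenOf (hroot : parent r = r) {c u : T}
    (hc : c ∈ childrenOf parent u) : c ≠ r := by
  rintro rfl
  rw [mem_childrenOf, hroot] at hc
  exact hc.2 hc.1

theorem depth_of_mem_childrenOf (hroot : parent r = r)
    (hdepth : ∀ v, v ≠ r → depth v = depth (parent v) + 1)
    {c u : T} (hc : c ∈ childrenOf parent u) : depth c = depth u + 1 := by
  rw [hdepth c (ne_root_of_mem_childrenOf hroot hc), (mem_childrenOf.1 hc).1]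

theorem parent_step_of_mem_childrenOf (hroot : parent r = r) {c u : T}
    (hc : c ∈ childrenOf parent u) : c ≠ r ∧ parent c = u :=
  ⟨ne_root_of_mem_childrenOf hroot hc, (mem_childrenOf.1 hc).1⟩

theorem isDesc_iff_eq_or_exists_child (hroot : parent r = r)
    (hdepth : ∀ v, v ≠ r → depth v = depth (parent v) + 1) {x u : T} :
    IsDesc r parent x u ↔ x = u ∨ ∃ c ∈ childrenOf parent u, IsDesc r parent x c := by
  refine ⟨fun h => ?_, ?_⟩
  · rcases Relation.ReflTransGen.cases_tail h with rfl | ⟨c, hxc, hcr, rfl⟩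
    · exact Or.inl rfl
    · refine Or.inr ⟨c, mem_childrenOf.2 ⟨rfl, fun hc => ?_⟩, hxc⟩
      have := hdepth c hcr
      rw [← hc] at this
      omega
  · rintro (rfl | ⟨c, hc, hxc⟩)
    · exact Relation.ReflTransGen.refl
    · exact hxc.tail (parent_step_of_mem_childrenOf hroot hc)

theorem childrenOf_induction (hroot : parent r = r)
    (hdepth : ∀ v, v ≠ r → depth v = depth (parent v) + 1) {P : T → Prop}
    (step : ∀ u, (∀ c ∈ childrenOf parent u, P c) → P u) (u : T) : P u := by
  refine (measure fun x => univ.sup depth - depth x).wf.induction u fun u ih => ?_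
  refine step u fun c hc => ih c ?_
  have hcu := depth_of_mem_childrenOf hroot hdepth hc
  have hc_le : depth c ≤ univ.sup depth := le_sup (mem_univ c)
  show univ.sup depth - depth c < univ.sup depth - depth u
  omega

theorem weightOf_eq_ite_add_sum (hroot : parent r = r)
    (hdepth : ∀ v, v ≠ r → depth v = depth (parent v) + 1) (S : Finset T) (u : T) :
    weightOf r parent S u
      = (if u ∈ S then 1 else 0) + ∑ c ∈ childrenOf parent u, weightOf r parent S c := by
  have hsplit : S.filter (fun x => IsDesc r parent x u)
      = S.filter (· = u) ∪
        (childrenOf parent u).biUnion (fun c => S.filter (fun x => IsDesc r parent x c)) := by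
    ext x
    simp only [mem_filter, mem_union, mem_biUnion]
    rw [isDesc_iff_eq_or_exists_child hroot hdepth]
    tauto
  have hdisj : Disjoint (S.filter (· = u))
      ((childrenOf parent u).biUnion fun c => S.filter (fun x => IsDesc r parent x c)) := by
    simp only [disjoint_left, mem_filter, mem_biUnion, not_exists, not_and]
    rintro x ⟨-, rfl⟩ c hc - hxc
    have := hxc.depth_le hdepth
    have := depth_of_mem_childrenOf hroot hdepth hc
    omega
  have hpairwise : (childrenOf parent u : Set T).PairwiseDisjoint
      (fun c => S.filter (fun x => IsDesc r parent x c)) := by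
    intro c₁ h₁ c₂ h₂ hne
    simp only [Function.onFun, disjoint_left, mem_filter]
    refine fun x hx₁ hx₂ => hne (hx₁.2.eq_of_depth_eq hdepth hx₂.2 ?_)
    rw [depth_of_mem_childrenOf hroot hdepth h₁, depth_of_mem_childrenOf hroot hdepth h₂]
  rw [weightOf, hsplit, card_union_of_disjoint hdisj, card_biUnion hpairwise, filter_eq']
  split_ifs <;> rfl

end RootedTree

section Guesses

variable {T : Type*} [Fintype T] [DecidableEq T] {r : T} {parent : T → T} {depth : T → ℕ}
  {a g : T → ℕ} {S : Finset T}

theorem eq_of_mem_childrenOf_of_mem (hroot : parent r = r)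
    (hdepth : ∀ v, v ≠ r → depth v = depth (parent v) + 1)
    (hws : ∀ u ∈ S, ∀ v ∈ S, depth u = depth v → u = v) {u c₁ c₂ : T}
    (h₁ : c₁ ∈ childrenOf parent u) (h₂ : c₂ ∈ childrenOf parent u) (hS₁ : c₁ ∈ S)
    (hS₂ : c₂ ∈ S) : c₁ = c₂ :=
  hws c₁ hS₁ c₂ hS₂ <| by
    rw [depth_of_mem_childrenOf hroot hdepth h₁, depth_of_mem_childrenOf hroot hdepth h₂]

theorem sum_weightOf_childrenOf_lt (hroot : parent r = r)
    (hdepth : ∀ v, v ≠ r → depth v = depth (parent v) + 1)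
    (hapos : ∀ v, 0 < a v) (hsuper : ∀ v, ∑ c ∈ childrenOf parent v, a c ≤ a v)
    (hws : ∀ u ∈ S, ∀ v ∈ S, depth u = depth v → u = v)
    (honly : ∀ v ∈ S, (∀ c, parent c = parent v → c ≠ parent v → c = v) → g v = a v)
    (u : T) (hlight : ∀ v ∈ S, IsStrictDesc r parent v u → weightOf r parent S v < g v) :
    ∑ c ∈ childrenOf parent u, weightOf r parent S c < a u := by
  induction u using childrenOf_induction hroot hdepth with
  | step u ih =>
    have hlight_child : ∀ c ∈ childrenOf parent u, ∀ v ∈ S, IsStrictDesc r parent v c →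
        weightOf r parent S v < g v := fun c hc v hv hvc =>
      hlight v hv (hvc.tail (parent_step_of_mem_childrenOf hroot hc))
    have hweight_child : ∀ c ∈ childrenOf parent u,
        weightOf r parent S c < a c + if c ∈ S then 1 else 0 := by
      intro c hc
      have := ih c hc (hlight_child c hc)
      rw [weightOf_eq_ite_add_sum hroot hdepth]
      omega
    by_cases hout : ∃ c ∈ childrenOf parent u, c ∉ S
    · refine lt_of_lt_of_le (sum_lt_sum (fun c hc => ?_) ?_) (hsuper u)
      · have := hweight_child c hc
        split_ifs at this <;> omega
      · obtain ⟨c, hc, hcS⟩ := hout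
        refine ⟨c, hc, ?_⟩
        simpa [hcS] using hweight_child c hc
    push Not at hout
    rcases (childrenOf parent u).eq_empty_or_nonempty with hnil | ⟨c, hc⟩
    · simpa [hnil] using hapos u
    have hsingle : childrenOf parent u = {c} := eq_singleton_iff_unique_mem.2
      ⟨hc, fun c' hc' =>
        eq_of_mem_childrenOf_of_mem hroot hdepth hws hc' hc (hout c' hc') (hout c hc)⟩
    have hpc : parent c = u := (mem_childrenOf.1 hc).1
    have hgc : g c = a c := honly c (hout c hc) fun c' hc' hne => by
      rw [← mem_singleton, ← hsingle, mem_childrenOf, ← hpc]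
      exact ⟨hc', hne⟩
    have hc_light := hlight c (hout c hc) (.single (parent_step_of_mem_childrenOf hroot hc))
    have hac := hsuper u
    rw [hsingle, sum_singleton] at hac ⊢
    omega

end Guesses

theorem guess_correctness_criterion_general {T : Type*} [Fintype T] [DecidableEq T]
    (r : T) (parent : T → T) (depth : T → ℕ)
    (hroot : parent r = r)
    (hdepth : ∀ v, v ≠ r → depth v = depth (parent v) + 1)
    (a : T → ℕ) (hapos : ∀ v, 0 < a v)
    (hsuper : ∀ v, ∑ c ∈ childrenOf parent v, a c ≤ a v)
    (S : Finset T) (g : T → ℕ)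
    (hg : ∀ v ∈ S, a v ≤ g v)
    (hws : ∀ u ∈ S, ∀ v ∈ S, depth u = depth v → u = v)
    (honly : ∀ v ∈ S, (∀ c, parent c = parent v → c ≠ parent v → c = v) → g v = a v)
    (v : T) (hv : v ∈ S) (hheavy : g v ≤ weightOf r parent S v)
    (hnodesc : ∀ v' ∈ S, IsStrictDesc r parent v' v →
      ¬ (g v' ≤ weightOf r parent S v')) :
    g v = a v := by
  have hchildren := sum_weightOf_childrenOf_lt hroot hdepth hapos hsuper hws honly v
    fun v' hv' hdesc => not_le.1 (hnodesc v' hv' hdesc)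
  rw [weightOf_eq_ite_add_sum hroot hdepth, if_pos hv] at hheavy
  have := hg v hv
  omega

/-- Correctness criterion for guesses. In the setting of the weight bound lemma,
if `v ∈ S` is heavy and no strict descendant of `v` in `S` is heavy, then `g(v) = a(v)`. -/
theorem guess_correctness_criterion {T : Type*} [Fintype T] [DecidableEq T]
    (r : T) (parent : T → T) (depth : T → ℕ)
    (hroot : parent r = r) (hdepth0 : depth r = 0)
    (hdepth : ∀ v, v ≠ r → depth v = depth (parent v) + 1)
    (hreach : ∀ v, IsDesc r parent v r)
    (a : T → ℕ) (hapos : ∀ v, 0 < a v)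
    (hsuper : ∀ v, ∑ c ∈ childrenOf parent v, a c ≤ a v)
    (S : Finset T) (g : T → ℕ)
    (hg : ∀ v ∈ S, a v ≤ g v)
    (hws : ∀ u ∈ S, ∀ v ∈ S, depth u = depth v → u = v)
    (honly : ∀ v ∈ S, (∀ c, parent c = parent v → c ≠ parent v → c = v) → g v = a v)
    (v : T) (hv : v ∈ S) (hheavy : g v ≤ weightOf r parent S v)
    (hnodesc : ∀ v' ∈ S, IsStrictDesc r parent v' v →
      ¬ (g v' ≤ weightOf r parent S v')) :
    g v = a v :=
  guess_correctness_criterion_general r parent depth hroot hdepth a hapos hsuper S g hg hws honly v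
    hv hheavy hnodesc
end
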